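/- arXiv:math/0408221 — 7 statements merged into one kernel-verified Lean document; each statement's English description precedes it below -/
import Mathlib

section
/- Let N be an odd positive integer, k an integer, ε ∈ {1, −1}, a₂ ∈ ℂ, and f : ℍ → ℂ. Assume: (i) f ∣[k] T = f; (ii) f ∣[k] H_N = ε • f; (iii) f ∣[k] [[2,0],[0,1]] + f ∣[k] [[1,0],[0,2]] + f ∣[k] [[1,1],[0,2]] = a₂ • f; and (iv) the pairing hypothesis for f (encoding Pairing Assumptions 1 and 2). Then f ∣[k] γ = f for every γ ∈ G_{0,2}(N). -/
open Matrix UpperHalfPlane Complex CongruenceSubgroup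
open scoped ModularForm MatrixGroups

/-- The element of `GL(2, ℝ)⁺` with entries `[[a, b], [c, d]]` and positive determinant. -/
noncomputable def glp (a b c d : ℝ) (h : 0 < a * d - b * c) : GL(2, ℝ)⁺ :=
  ⟨Matrix.GeneralLinearGroup.mkOfDetNeZero !![a, b; c, d]
      (by rw [Matrix.det_fin_two_of]; exact ne_of_gt h),
   by
    rw [Matrix.mem_glpos]
    show (0:ℝ) < ((Matrix.GeneralLinearGroup.det _ : ℝˣ) : ℝ)
    rw [Matrix.GeneralLinearGroup.val_det_apply]
    show (0:ℝ) < Matrix.det !![a, b; c, d]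
    rw [Matrix.det_fin_two_of]; exact h⟩

lemma det_pos_of_eq_one {a b c d : ℝ} (h : a * d - b * c = 1) : 0 < a * d - b * c := by
  rw [h]; norm_num

/-- The pairing hypothesis, encoding Pairing Assumptions 1 and 2: for each admissible
`n, α, β`, invariance of `f` under `[[2^n, α],[βN, (αβN+1)/2^n]]` yields invariance under both
matrices of the integer pair (`P₁` when `2^(n+1) ∣ αβN+1`, and `P₂` otherwise). -/
def PairingHyp (N : ℕ) (k : ℤ) (f : ℍ → ℂ) : Prop :=
  ∀ (n : ℕ) (α β : ℤ), 1 ≤ n → Odd α → Odd β → ((2:ℤ)^n) ∣ α * β * N + 1 →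
    2 * |α| ≤ 2^n → 2 * |β| ≤ 2^n →
    f ∣[k] (glp ((2:ℝ)^n) (α:ℝ) ((β:ℝ)*(N:ℝ)) (((α:ℝ)*(β:ℝ)*(N:ℝ)+1)/(2:ℝ)^n)
        (det_pos_of_eq_one (by
          have hne : ((2:ℝ)^n) ≠ 0 := by positivity
          field_simp; ring)) : GL (Fin 2) ℝ) = f →
    ((((2:ℤ)^(n+1)) ∣ α * β * N + 1 →
      f ∣[k] (glp ((2:ℝ)^(n+1)) (α:ℝ) ((β:ℝ)*(N:ℝ)) (((α:ℝ)*(β:ℝ)*(N:ℝ)+1)/(2:ℝ)^(n+1))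
          (det_pos_of_eq_one (by
            have hne : ((2:ℝ)^(n+1)) ≠ 0 := by positivity
            field_simp; ring)) : GL (Fin 2) ℝ) = f ∧
      f ∣[k] (glp ((2:ℝ)^(n+1)) ((α:ℝ)-(2:ℝ)^n) (((β:ℝ)-(2:ℝ)^n)*(N:ℝ))
          ((((α:ℝ)-(2:ℝ)^n)*((β:ℝ)-(2:ℝ)^n)*(N:ℝ)+1)/(2:ℝ)^(n+1))
          (det_pos_of_eq_one (by
            have hne : ((2:ℝ)^(n+1)) ≠ 0 := by positivity
            field_simp; ring)) : GL (Fin 2) ℝ) = f) ∧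
     (¬ ((2:ℤ)^(n+1)) ∣ α * β * N + 1 →
      f ∣[k] (glp ((2:ℝ)^(n+1)) ((α:ℝ)-(2:ℝ)^n) ((β:ℝ)*(N:ℝ))
          ((((α:ℝ)-(2:ℝ)^n)*(β:ℝ)*(N:ℝ)+1)/(2:ℝ)^(n+1))
          (det_pos_of_eq_one (by
            have hne : ((2:ℝ)^(n+1)) ≠ 0 := by positivity
            field_simp; ring)) : GL (Fin 2) ℝ) = f ∧
      f ∣[k] (glp ((2:ℝ)^(n+1)) (α:ℝ) (((β:ℝ)-(2:ℝ)^n)*(N:ℝ))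
          (((α:ℝ)*((β:ℝ)-(2:ℝ)^n)*(N:ℝ)+1)/(2:ℝ)^(n+1))
          (det_pos_of_eq_one (by
            have hne : ((2:ℝ)^(n+1)) ≠ 0 := by positivity
            field_simp; ring)) : GL (Fin 2) ℝ) = f))

/-- `G_{0,2}(N)`: matrices in `Γ₀(N)` whose upper-left entry is a power of `2`. -/
def G02 (N : ℕ) : Set SL(2, ℤ) :=
  {γ | γ ∈ Gamma0 N ∧ ∃ n : ℕ, (γ : Matrix (Fin 2) (Fin 2) ℤ) 0 0 = 2^n}

/-!
Let `S` be the group of `g ∈ GL(2, ℝ)` with `f ∣[k] g = f`. It contains `T`, and, since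
`T H_N W_N = H_N` and `f` is an eigenfunction of `H_N`, also `W_N`. Every element of `G_{0,2}(N)`
is a matrix `M(n, α, β) = [[2^n, α], [βN, (αβN+1)/2^n]]`, and multiplying by powers of `T` on the
right and of `W_N` on the left shows that `M(n, α, β) ∈ S` depends only on `α, β mod 2^n`.
For `n = 0` this reduces to the identity matrix; for `n = 1`, slashing the Hecke relation by
`H_N` gives `M(1, -1, -1) ∈ S`. From `n` to `n + 1`, reduce `α, β` to representatives with
`2|α|, 2|β| ≤ 2^n` and apply the pairing hypothesis: the integer pair consists precisely of the
lifts mod `2^(n+1)` for which `2^(n+1) ∣ αβN+1`, since shifting `α` or `β` by `2^n` flips this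
divisibility.
-/

open Matrix.GeneralLinearGroup (upperRightHom)

def slashStabilizer (k : ℤ) (f : ℍ → ℂ) : Subgroup (GL (Fin 2) ℝ) where
  carrier := {g | f ∣[k] g = f}
  one_mem' := SlashAction.slash_one k f
  mul_mem' {g h} (hg : f ∣[k] g = f) (hh : f ∣[k] h = f) := by
    rw [Set.mem_ofPred_eq, SlashAction.slash_mul, hg, hh]
  inv_mem' {g} (hg : f ∣[k] g = f) := by
    rw [Set.mem_ofPred_eq]
    conv_lhs => rw [← hg]
    rw [← SlashAction.slash_mul, mul_inv_cancel, SlashAction.slash_one]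

section Stabilizer

variable {k : ℤ} {f : ℍ → ℂ} {g h w : GL (Fin 2) ℝ}

lemma mem_slashStabilizer : g ∈ slashStabilizer k f ↔ f ∣[k] g = f := Iff.rfl

lemma slash_left_injective (k : ℤ) (g : GL (Fin 2) ℝ) :
    Function.Injective (fun f : ℍ → ℂ ↦ f ∣[k] g) := by
  intro f₁ f₂ h
  simpa [← SlashAction.slash_mul] using congrArg (· ∣[k] g⁻¹) h

lemma mem_slashStabilizer_of_slash_mul_eq (h₁ : f ∣[k] (g * h) = f ∣[k] h) :
    g ∈ slashStabilizer k f :=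
  slash_left_injective k h (by simpa [SlashAction.slash_mul] using h₁)

lemma smul_slash_of_det_pos {c : ℂ} (hg : 0 < g.det.val) : (c • f) ∣[k] g = c • f ∣[k] g := by
  rw [ModularForm.smul_slash, UpperHalfPlane.σ, if_pos hg]
  rfl

lemma slash_slash_of_mul_eq {c : ℂ} (hh : f ∣[k] h = c • f) (hw : 0 < w.det.val)
    (hcomm : g * h = h * w) : (f ∣[k] g) ∣[k] h = c • f ∣[k] w := by
  rw [← SlashAction.slash_mul, hcomm, SlashAction.slash_mul, hh, smul_slash_of_det_pos hw]

lemma mem_slashStabilizer_of_mul_mul_eq {c : ℂ} (hc : c ≠ 0) (hh : f ∣[k] h = c • f)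
    (hw : 0 < w.det.val) (hg : g ∈ slashStabilizer k f) (heq : g * h * w = h) :
    w ∈ slashStabilizer k f := by
  refine smul_right_injective _ hc ?_
  calc c • f ∣[k] w = (f ∣[k] h) ∣[k] w := by rw [hh, smul_slash_of_det_pos hw]
    _ = ((f ∣[k] g) ∣[k] h) ∣[k] w := by rw [mem_slashStabilizer.mp hg]
    _ = c • f := by rw [← SlashAction.slash_mul, ← SlashAction.slash_mul, ← mul_assoc, heq, hh]

end Stabilizer

lemma coe_glp (a b c d : ℝ) (h : 0 < a * d - b * c) :
    ((glp a b c d h : GL (Fin 2) ℝ) : Matrix (Fin 2) (Fin 2) ℝ) = !![a, b; c, d] := rfl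

lemma det_coe_glp_pos (a b c d : ℝ) (h : 0 < a * d - b * c) :
    0 < (glp a b c d h : GL (Fin 2) ℝ).det.val := by
  rwa [Matrix.GeneralLinearGroup.val_det_apply, coe_glp, Matrix.det_fin_two_of]

lemma upperRightHom_one_eq_glp : upperRightHom (1 : ℝ) = glp 1 1 0 1 (by norm_num) := by
  ext i j; fin_cases i <;> rfl

noncomputable def twoPowMatrix (N n : ℕ) (α β : ℤ) : GL (Fin 2) ℝ :=
  glp ((2:ℝ)^n) (α:ℝ) ((β:ℝ)*(N:ℝ)) (((α:ℝ)*(β:ℝ)*(N:ℝ)+1)/(2:ℝ)^n)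
    (det_pos_of_eq_one (by field_simp; ring))

lemma coe_twoPowMatrix (N n : ℕ) (α β : ℤ) :
    (twoPowMatrix N n α β : Matrix (Fin 2) (Fin 2) ℝ)
      = !![2 ^ n, (α : ℝ); β * N, (α * β * N + 1) / 2 ^ n] := rfl

section Relations

variable (N n : ℕ) (α β m : ℤ)

lemma twoPowMatrix_mul_upperRightHom :
    twoPowMatrix N n α β * upperRightHom (m : ℝ) = twoPowMatrix N n (α + 2 ^ n * m) β := by
  ext i j; fin_cases i <;> fin_cases j <;>
    simp [coe_twoPowMatrix, Matrix.mul_apply, Fin.sum_univ_two] <;> field_simp <;> ring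

lemma glp_mul_twoPowMatrix :
    glp 1 0 (m * N) 1 (by norm_num) * twoPowMatrix N n α β
      = twoPowMatrix N n α (β + 2 ^ n * m) := by
  ext i j; fin_cases i <;> fin_cases j <;>
    simp [coe_glp, coe_twoPowMatrix, Matrix.mul_apply, Fin.sum_univ_two] <;> field_simp <;> ring

lemma twoPowMatrix_zero_zero_zero : twoPowMatrix N 0 0 0 = 1 := by
  ext i j; fin_cases i <;> fin_cases j <;> simp [coe_twoPowMatrix]

lemma upperRightHom_mul_glp_mul_glp (hN : (0:ℝ) < N) :
    upperRightHom (m : ℝ) * glp 0 (-1) N 0 (by simpa using hN) * glp 1 0 (m * N) 1 (by norm_num)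
      = glp 0 (-1) N 0 (by simpa using hN) := by
  ext i j; fin_cases i <;> fin_cases j <;> simp [coe_glp, Matrix.mul_apply, Fin.sum_univ_two]

end Relations

lemma twoPowMatrix_mem_of_modEq {S : Subgroup (GL (Fin 2) ℝ)} {N n : ℕ}
    (hU : ∀ m : ℤ, upperRightHom (m : ℝ) ∈ S)
    (hL : ∀ m : ℤ, (glp 1 0 (m * N) 1 (by norm_num) : GL (Fin 2) ℝ) ∈ S)
    {α β α' β' : ℤ} (hα : α ≡ α' [ZMOD 2 ^ n]) (hβ : β ≡ β' [ZMOD 2 ^ n])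
    (h : twoPowMatrix N n α β ∈ S) : twoPowMatrix N n α' β' ∈ S := by
  obtain ⟨s, hs⟩ := hα.dvd
  obtain ⟨t, ht⟩ := hβ.dvd
  rw [show α' = α + 2 ^ n * s by linarith, show β' = β + 2 ^ n * t by linarith,
    ← glp_mul_twoPowMatrix, ← twoPowMatrix_mul_upperRightHom]
  exact S.mul_mem (hL t) (S.mul_mem h (hU s))

section Invariance

variable {N : ℕ} {k : ℤ} {f : ℍ → ℂ}

lemma upperRightHom_intCast_mem (hT : f ∣[k] (glp 1 1 0 1 (by norm_num) : GL (Fin 2) ℝ) = f)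
    (m : ℤ) : upperRightHom (m : ℝ) ∈ slashStabilizer k f := by
  have h₁ : upperRightHom (1 : ℝ) ∈ slashStabilizer k f := by
    rw [upperRightHom_one_eq_glp]; exact hT
  simpa only [← AddChar.map_zsmul_eq_zpow, zsmul_one] using zpow_mem h₁ m

lemma glp_lowerUnipotent_mem {ε : ℂ} (hN : 0 < N) (hε : ε ≠ 0)
    (hT : f ∣[k] (glp 1 1 0 1 (by norm_num) : GL (Fin 2) ℝ) = f)
    (hH : f ∣[k] (glp 0 (-1) N 0 (by simpa using hN) : GL (Fin 2) ℝ) = ε • f) (m : ℤ) :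
    (glp 1 0 (m * N) 1 (by norm_num) : GL (Fin 2) ℝ) ∈ slashStabilizer k f :=
  mem_slashStabilizer_of_mul_mul_eq hε hH (det_coe_glp_pos ..) (upperRightHom_intCast_mem hT m)
    (upperRightHom_mul_glp_mul_glp N m (by exact_mod_cast hN))

lemma twoPowMatrix_one_neg_one_neg_one_mem {ε a₂ : ℂ} (hN : 0 < N) (hε : ε ≠ 0)
    (hH : f ∣[k] (glp 0 (-1) N 0 (by simpa using hN) : GL (Fin 2) ℝ) = ε • f)
    (hT2 : f ∣[k] (glp 2 0 0 1 (by norm_num) : GL (Fin 2) ℝ)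
      + f ∣[k] (glp 1 0 0 2 (by norm_num) : GL (Fin 2) ℝ)
      + f ∣[k] (glp 1 1 0 2 (by norm_num) : GL (Fin 2) ℝ) = a₂ • f) :
    twoPowMatrix N 1 (-1) (-1) ∈ slashStabilizer k f := by
  set H : GL (Fin 2) ℝ := ↑(glp 0 (-1) N 0 (by simpa using hN))
  set A₁ : GL (Fin 2) ℝ := ↑(glp 2 0 0 1 (by norm_num))
  set A₂ : GL (Fin 2) ℝ := ↑(glp 1 0 0 2 (by norm_num))
  set A₃ : GL (Fin 2) ℝ := ↑(glp 1 1 0 2 (by norm_num))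
  set B : GL (Fin 2) ℝ := ↑(glp 2 0 (-N) 1 (by norm_num))
  obtain ⟨h₁, h₂, h₃, hB⟩ : A₁ * H = H * A₂ ∧ A₂ * H = H * A₁ ∧ A₃ * H = H * B ∧
      B = twoPowMatrix N 1 (-1) (-1) * A₃ := by
    refine ⟨?_, ?_, ?_, ?_⟩ <;> ext i j <;> fin_cases i <;> fin_cases j <;>
      simp [H, A₁, A₂, A₃, B, coe_glp, coe_twoPowMatrix, Matrix.mul_apply, Fin.sum_univ_two] <;>
      ring
  have key : ε • (f ∣[k] A₂ + f ∣[k] A₁ + f ∣[k] B) = ε • (a₂ • f) :=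
    calc ε • (f ∣[k] A₂ + f ∣[k] A₁ + f ∣[k] B)
        = (f ∣[k] A₁ + f ∣[k] A₂ + f ∣[k] A₃) ∣[k] H := by
          rw [SlashAction.add_slash, SlashAction.add_slash,
            slash_slash_of_mul_eq hH (det_coe_glp_pos ..) h₁,
            slash_slash_of_mul_eq hH (det_coe_glp_pos ..) h₂,
            slash_slash_of_mul_eq hH (det_coe_glp_pos ..) h₃, smul_add, smul_add]
      _ = ε • (a₂ • f) := by rw [hT2, smul_slash_of_det_pos (det_coe_glp_pos ..), hH, smul_comm]
  have hsum : f ∣[k] A₁ + f ∣[k] A₂ + f ∣[k] B = f ∣[k] A₁ + f ∣[k] A₂ + f ∣[k] A₃ := by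
    rw [hT2, ← smul_right_injective _ hε key]; abel
  exact mem_slashStabilizer_of_slash_mul_eq (by rw [← hB]; exact add_left_cancel hsum)

end Invariance

lemma exists_odd_abs_le_modEq {P α : ℤ} (hP : 0 < P) (hα : Odd α) :
    ∃ α', Odd α' ∧ |α'| ≤ P ∧ α ≡ α' [ZMOD 2 * P] := by
  have hmod : α ≡ (α + P) % (2 * P) - P [ZMOD 2 * P] := by
    simpa using ((Int.mod_modEq (α + P) (2 * P)).sub_right P).symm
  refine ⟨_, ?_, abs_le.mpr ⟨?_, ?_⟩, hmod⟩
  · rw [Int.odd_iff] at hα ⊢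
    rw [← hα]
    exact (hmod.of_mul_right P).symm
  · linarith [Int.emod_nonneg (α + P) (by positivity : 2 * P ≠ 0)]
  · linarith [Int.emod_lt_of_pos (α + P) (by positivity : 0 < 2 * P)]

lemma exists_modEq_two_pow_succ {α α' : ℤ} {n : ℕ} (h : α ≡ α' [ZMOD 2 ^ n]) :
    ∃ s : ℤ, (s = 0 ∨ s = 1) ∧ α ≡ α' - 2 ^ n * s [ZMOD 2 ^ (n + 1)] := by
  obtain ⟨q, hq⟩ := h.dvd
  refine ⟨q % 2, Int.emod_two_eq q, Int.modEq_iff_dvd.mpr ⟨q / 2, ?_⟩⟩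
  linear_combination hq - 2 ^ n * Int.mul_ediv_add_emod q 2

lemma two_pow_succ_dvd_iff {α β : ℤ} {N n : ℕ} (hn : 1 ≤ n) (hα : Odd α) (hβ : Odd β)
    (hN : Odd N) (h : (2:ℤ) ^ n ∣ α * β * N + 1) (s t : ℤ) :
    (2:ℤ) ^ (n + 1) ∣ (α - 2 ^ n * s) * (β - 2 ^ n * t) * N + 1 ↔
      ((2:ℤ) ^ (n + 1) ∣ α * β * N + 1 ↔ Even (s + t)) := by
  obtain ⟨q, hq⟩ := h
  have hN' : Odd (N : ℤ) := by exact_mod_cast hN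
  have h2n : Even ((2:ℤ) ^ n) := (Int.even_pow' (by omega)).mpr even_two
  rw [show (α - 2 ^ n * s) * (β - 2 ^ n * t) * N + 1
      = 2 ^ n * (q - s * β * N - t * α * N + 2 ^ n * s * t * N) by linear_combination hq,
    hq, pow_succ, mul_dvd_mul_iff_left (by positivity), mul_dvd_mul_iff_left (by positivity),
    ← even_iff_two_dvd, ← even_iff_two_dvd]
  simp only [Int.even_add, Int.even_sub, Int.even_mul, h2n, Int.not_even_iff_odd.mpr hα,
    Int.not_even_iff_odd.mpr hβ, Int.not_even_iff_odd.mpr hN']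
  tauto

lemma PairingHyp.twoPowMatrix_mem {N : ℕ} {k : ℤ} {f : ℍ → ℂ} (hP : PairingHyp N k f)
    (hN : Odd N) {n : ℕ} {α β : ℤ} (hn : 1 ≤ n) (hα : Odd α) (hβ : Odd β)
    (hdvd : (2:ℤ) ^ n ∣ α * β * N + 1) (hαle : 2 * |α| ≤ 2 ^ n) (hβle : 2 * |β| ≤ 2 ^ n)
    (hmem : twoPowMatrix N n α β ∈ slashStabilizer k f) {s t : ℤ} (hs : s = 0 ∨ s = 1)
    (ht : t = 0 ∨ t = 1) (hdvd' : (2:ℤ) ^ (n + 1) ∣ (α - 2 ^ n * s) * (β - 2 ^ n * t) * N + 1) :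
    twoPowMatrix N (n + 1) (α - 2 ^ n * s) (β - 2 ^ n * t) ∈ slashStabilizer k f := by
  obtain ⟨hP₁, hP₂⟩ := hP n α β hn hα hβ hdvd hαle hβle hmem
  rw [two_pow_succ_dvd_iff hn hα hβ hN hdvd] at hdvd'
  simp only [twoPowMatrix, mem_slashStabilizer, Int.cast_sub, Int.cast_mul, Int.cast_pow,
    Int.cast_ofNat] at hP₁ hP₂ ⊢
  rcases hs with rfl | rfl <;> rcases ht with rfl | rfl <;> norm_num at hdvd' ⊢
  · exact (hP₁ hdvd').1
  · exact (hP₂ hdvd').2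
  · exact (hP₂ hdvd').1
  · exact (hP₁ hdvd').2

lemma twoPowMatrix_succ_mem {N : ℕ} {k : ℤ} {f : ℍ → ℂ} (hN : Odd N) (hPair : PairingHyp N k f)
    (hU : ∀ m : ℤ, upperRightHom (m : ℝ) ∈ slashStabilizer k f)
    (hL : ∀ m : ℤ, (glp 1 0 (m * N) 1 (by norm_num) : GL (Fin 2) ℝ) ∈ slashStabilizer k f)
    (hbase : twoPowMatrix N 1 (-1) (-1) ∈ slashStabilizer k f) (n : ℕ) :
    ∀ α β : ℤ, Odd α → Odd β → (2:ℤ) ^ (n + 1) ∣ α * β * N + 1 →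
      twoPowMatrix N (n + 1) α β ∈ slashStabilizer k f := by
  induction n with
  | zero =>
    intro α β hα hβ _
    have hodd {x : ℤ} (hx : Odd x) : -1 ≡ x [ZMOD 2 ^ (0 + 1)] := by
      obtain ⟨m, rfl⟩ := hx
      exact Int.modEq_iff_dvd.mpr ⟨m + 1, by ring⟩
    exact twoPowMatrix_mem_of_modEq hU hL (hodd hα) (hodd hβ) hbase
  | succ n ih =>
    intro α β hα hβ hdvd
    obtain ⟨α', hα', hα'le, hαα'⟩ := exists_odd_abs_le_modEq (P := 2 ^ n) (by positivity) hα
    obtain ⟨β', hβ', hβ'le, hββ'⟩ := exists_odd_abs_le_modEq (P := 2 ^ n) (by positivity) hβ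
    rw [← pow_succ'] at hαα' hββ'
    have hdvd' : (2:ℤ) ^ (n + 1) ∣ α' * β' * N + 1 :=
      (((hαα'.mul hββ').mul_right _).add_right 1).dvd_iff.mp
        ((pow_dvd_pow 2 (by omega)).trans hdvd)
    obtain ⟨s, hs, hαs⟩ := exists_modEq_two_pow_succ hαα'
    obtain ⟨t, ht, hβt⟩ := exists_modEq_two_pow_succ hββ'
    refine twoPowMatrix_mem_of_modEq hU hL hαs.symm hβt.symm ?_
    refine hPair.twoPowMatrix_mem hN (by omega) hα' hβ' hdvd' (by rw [pow_succ]; linarith)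
      (by rw [pow_succ]; linarith) (ih α' β' hα' hβ' hdvd') hs ht ?_
    exact (((hαs.mul hβt).mul_right _).add_right 1).dvd_iff.mp hdvd

lemma twoPowMatrix_mem {N : ℕ} {k : ℤ} {f : ℍ → ℂ} (hN : Odd N) (hPair : PairingHyp N k f)
    (hU : ∀ m : ℤ, upperRightHom (m : ℝ) ∈ slashStabilizer k f)
    (hL : ∀ m : ℤ, (glp 1 0 (m * N) 1 (by norm_num) : GL (Fin 2) ℝ) ∈ slashStabilizer k f)
    (hbase : twoPowMatrix N 1 (-1) (-1) ∈ slashStabilizer k f) {n : ℕ} {α β : ℤ}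
    (hdvd : (2:ℤ) ^ n ∣ α * β * N + 1) : twoPowMatrix N n α β ∈ slashStabilizer k f := by
  cases n with
  | zero =>
    refine twoPowMatrix_mem_of_modEq hU hL (α := 0) (β := 0) (by simp [Int.modEq_one])
      (by simp [Int.modEq_one]) ?_
    rw [twoPowMatrix_zero_zero_zero]
    exact one_mem _
  | succ n =>
    obtain ⟨q, hq⟩ := (dvd_pow_self 2 n.succ_ne_zero).trans hdvd
    have hodd : Odd (α * β * N) := ⟨q - 1, by linarith⟩
    obtain ⟨⟨hα, hβ⟩, -⟩ := (Int.odd_mul.mp hodd).imp_left Int.odd_mul.mp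
    exact twoPowMatrix_succ_mem hN hPair hU hL hbase n α β hα hβ hdvd

lemma exists_eq_twoPowMatrix_of_mem_G02 {N : ℕ} {γ : SL(2, ℤ)} (hγ : γ ∈ G02 N) :
    ∃ n α β, (2:ℤ) ^ n ∣ α * β * N + 1 ∧ (γ : GL (Fin 2) ℝ) = twoPowMatrix N n α β := by
  obtain ⟨hΓ, n, hn⟩ := hγ
  obtain ⟨c, hc⟩ : (N : ℤ) ∣ γ 1 0 :=
    (ZMod.intCast_zmod_eq_zero_iff_dvd _ N).mp (Gamma0_mem.mp hΓ)
  have hdet : γ 1 1 * 2 ^ n = γ 0 1 * c * N + 1 := by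
    have := γ.det_coe
    rw [Matrix.det_fin_two, hn, hc] at this
    linear_combination this
  refine ⟨n, γ 0 1, c, ⟨γ 1 1, by linear_combination -hdet⟩, ?_⟩
  ext i j
  fin_cases i <;> fin_cases j <;> simp [coe_twoPowMatrix, hn, hc]
  · ring
  · field_simp; exact_mod_cast hdet

/-- Under the pairing hypothesis, if `f ∣[k] T = f`, `f ∣[k] H_N = ε • f` and `f ∣[k] T₂ = a₂ • f`,
then `f ∣[k] γ = f` for every `γ ∈ G_{0,2}(N)`. -/
theorem slash_invariant_of_G02 (N : ℕ) (hN : 0 < N) (hNodd : Odd N) (k : ℤ) (ε : ℂ)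
    (hε : ε = 1 ∨ ε = -1) (a₂ : ℂ) (f : ℍ → ℂ)
    (hT : f ∣[k] (glp 1 1 0 1 (by norm_num) : GL (Fin 2) ℝ) = f)
    (hH : f ∣[k] (glp 0 (-1) (N:ℝ) 0
        (by simpa using (by exact_mod_cast hN : (0:ℝ) < N)) : GL (Fin 2) ℝ) = ε • f)
    (hT2 : f ∣[k] (glp 2 0 0 1 (by norm_num) : GL (Fin 2) ℝ) + f ∣[k] (glp 1 0 0 2 (by norm_num) : GL (Fin 2) ℝ)
        + f ∣[k] (glp 1 1 0 2 (by norm_num) : GL (Fin 2) ℝ) = a₂ • f)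
    (hPair : PairingHyp N k f) :
    ∀ γ ∈ G02 N, f ∣[k] γ = f := by
  have hε0 : ε ≠ 0 := by rcases hε with rfl | rfl <;> norm_num
  intro γ hγ
  obtain ⟨n, α, β, hdvd, hγ⟩ := exists_eq_twoPowMatrix_of_mem_G02 hγ
  rw [ModularForm.SL_slash, hγ]
  exact twoPowMatrix_mem hNodd hPair (upperRightHom_intCast_mem hT)
    (glp_lowerUnipotent_mem hN hε0 hT hH) (twoPowMatrix_one_neg_one_neg_one_mem hN hε0 hH hT2) hdvd
end

section
/- Let N be an odd positive integer and assume the weak Artin hypothesis. Then the subgroup of SL(2,ℤ) generated by the set G_{0,2}(N) equals Γ_{0,2}(N). -/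
open Matrix CongruenceSubgroup
open scoped MatrixGroups

/-- `Γ_{0,2}(N)`: matrices in `Γ₀(N)` whose upper-left entry is congruent to a power of `2`
modulo `N`. -/
def Gamma02 (N : ℕ) : Set SL(2, ℤ) :=
  {γ | γ ∈ Gamma0 N ∧ ∃ j : ℕ, (γ : Matrix (Fin 2) (Fin 2) ℤ) 0 0 ≡ 2^j [ZMOD (N:ℤ)]}

/-- The weak form of Artin's conjecture on primitive roots: if `gcd(d, bM) = 1` then
`b ≡ 2^n (mod d + mM)` for some integer `m` and some nonnegative integer `n`. -/
def WeakArtin : Prop :=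
  ∀ b d M : ℤ, Int.gcd d (b * M) = 1 → ∃ (m : ℤ) (n : ℕ), b ≡ 2^n [ZMOD (d + m * M)]

/-!
`Γ_{0,2}(N)` is a subgroup since `2` is a unit modulo the odd number `N`, so it contains the group
generated by `G_{0,2}(N)`. Conversely, right multiplication of `g = [[a, b], [c, d]] ∈ Γ_{0,2}(N)`
by `[[1, 0], [Nk, 1]] ∈ G_{0,2}(N)` replaces `a` by `a + Nkb` and keeps `b`; the weak Artin
hypothesis chooses `k` so that `a` becomes odd with `b ≡ 2^n (mod a)`. Then `2^s b ≡ 1 (mod a)`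
and `2^(s+t) ≡ a (mod N)` for some `s, t`, and there is `w = [[2^s, *], [a - 2^(s+t), *]]` in
`G_{0,2}(N)` for which `g w⁻¹` has upper left entry `2^t`, so `g = (g w⁻¹) w` is a product of two
elements of `G_{0,2}(N)`.
-/

namespace Int

theorem two_pow_totient_modEq_one {m : ℤ} (hm : Odd m) : 2 ^ m.natAbs.totient ≡ 1 [ZMOD m] := by
  rw [← modEq_natAbs]
  exact_mod_cast natCast_modEq_iff.mpr
    (Nat.ModEq.pow_totient (Nat.coprime_two_left.mpr (natAbs_odd.mpr hm)))

theorem exists_two_pow_mul_modEq_one {m b : ℤ} {n : ℕ} (hm : Odd m) (hb : b ≡ 2 ^ n [ZMOD m]) :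
    ∃ k : ℕ, 2 ^ k * b ≡ 1 [ZMOD m] := by
  obtain ⟨φ, hφ⟩ : ∃ φ, m.natAbs.totient = φ + 1 :=
    Nat.exists_eq_add_one.mpr (Nat.totient_pos.mpr (natAbs_pos.mpr (by rintro rfl; simp at hm)))
  refine ⟨n * φ, ?_⟩
  calc 2 ^ (n * φ) * b ≡ 2 ^ (n * φ) * 2 ^ n [ZMOD m] := hb.mul_left _
    _ = (2 ^ m.natAbs.totient) ^ n := by rw [hφ]; ring
    _ ≡ 1 ^ n [ZMOD m] := (two_pow_totient_modEq_one hm).pow n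
    _ = 1 := one_pow n

theorem isCoprime_of_modEq_two_pow {a m : ℤ} {j : ℕ} (hm : Odd m) (ha : a ≡ 2 ^ j [ZMOD m]) :
    IsCoprime a m := by
  obtain ⟨k, hk⟩ := exists_two_pow_mul_modEq_one hm ha
  obtain ⟨z, hz⟩ := hk.symm.dvd
  exact ⟨2 ^ k, -z, by linear_combination hz⟩

theorem exists_odd_add_mul {a b c : ℤ} (hab : IsCoprime a b) (hc : Odd c) :
    ∃ t : ℤ, Odd (a + b * (c * t)) := by
  rcases even_or_odd a with ha | ha
  · have hb : Odd b :=
      isCoprime_two_left.mp (hab.of_isCoprime_of_dvd_left (even_iff_two_dvd.mp ha))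
    exact ⟨1, by simpa using ha.add_odd (hb.mul hc)⟩
  · exact ⟨0, by simpa using ha⟩

end Int

namespace Matrix.SpecialLinearGroup

theorem det_fin_two_eq_one {R : Type*} [CommRing R] (A : SL(2, R)) :
    A 0 0 * A 1 1 - A 0 1 * A 1 0 = 1 := by
  rw [← det_fin_two]; exact A.det_coe

theorem mul_inv_apply_zero_zero {R : Type*} [CommRing R] (g w : SL(2, R)) :
    (g * w⁻¹) 0 0 = g 0 0 * w 1 1 - g 0 1 * w 1 0 := by
  simp [coe_inv, adjugate_fin_two, Matrix.mul_apply, Fin.sum_univ_two]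
  ring

theorem exists_SL2_of_mul_modEq_one {α β p q : ℤ} (hβ : p * β ≡ 1 [ZMOD α])
    (hcop : IsCoprime α (p * q)) :
    ∃ w : SL(2, ℤ), w 0 0 = p ∧ w 1 0 = α - p * q ∧ α * w 1 1 - β * w 1 0 = q := by
  obtain ⟨d, hd⟩ : α ∣ q + β * (α - p * q) := by
    obtain ⟨z, hz⟩ := hβ.symm.dvd
    exact ⟨β - q * z, by linear_combination -q * hz⟩
  obtain ⟨b, hb⟩ : α - p * q ∣ p * d - 1 := by
    refine IsCoprime.dvd_of_dvd_mul_right (z := α) ?_ ⟨p * β - 1, ?_⟩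
    · rw [show α - p * q = -(p * q) + α * 1 by ring]
      exact hcop.symm.neg_left.add_mul_left_left 1
    · linear_combination -p * hd
  exact ⟨⟨!![p, b; α - p * q, d], by simp [det_fin_two_of]; linear_combination hb⟩,
    rfl, rfl, by simp; linear_combination -hd⟩

end Matrix.SpecialLinearGroup

theorem mem_Gamma0_iff_dvd {N : ℕ} {A : SL(2, ℤ)} : A ∈ Gamma0 N ↔ (N : ℤ) ∣ A 1 0 :=
  Gamma0_mem.trans (ZMod.intCast_zmod_eq_zero_iff_dvd _ _)

theorem G02_subset_Gamma02 (N : ℕ) : G02 N ⊆ Gamma02 N :=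
  fun _ ⟨hg, n, hn⟩ ↦ ⟨hg, n, by rw [hn]⟩

def Gamma02Subgroup {N : ℕ} (hN : Odd N) : Subgroup SL(2, ℤ) where
  carrier := Gamma02 N
  one_mem' := ⟨one_mem _, 0, by simp⟩
  mul_mem' := by
    rintro A B ⟨hA, i, hi⟩ ⟨hB, j, hj⟩
    refine ⟨mul_mem hA hB, i + j, ?_⟩
    have hB10 : A 0 1 * B 1 0 ≡ 0 [ZMOD N] :=
      Int.modEq_zero_iff_dvd.mpr ((mem_Gamma0_iff_dvd.mp hB).mul_left _)
    simpa [Matrix.mul_apply, Fin.sum_univ_two, pow_add] using (hi.mul hj).add hB10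
  inv_mem' := by
    rintro A ⟨hA, j, hj⟩
    obtain ⟨k, hk⟩ := Int.exists_two_pow_mul_modEq_one (m := N) (by exact_mod_cast hN) hj
    refine ⟨inv_mem hA, k, ?_⟩
    have hdet : A 0 0 * A 1 1 ≡ 1 [ZMOD N] := by
      obtain ⟨z, hz⟩ := mem_Gamma0_iff_dvd.mp hA
      refine (Int.modEq_iff_dvd.mpr ⟨A 0 1 * z, ?_⟩).symm
      linear_combination A.det_fin_two_eq_one + A 0 1 * hz
    calc ((A⁻¹ : SL(2, ℤ)) : Matrix (Fin 2) (Fin 2) ℤ) 0 0 = 1 * A 1 1 := by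
          simp [adjugate_fin_two]
      _ ≡ 2 ^ k * A 0 0 * A 1 1 [ZMOD N] := hk.symm.mul_right _
      _ = 2 ^ k * (A 0 0 * A 1 1) := mul_assoc ..
      _ ≡ 2 ^ k * 1 [ZMOD N] := hdet.mul_left _
      _ = 2 ^ k := mul_one _

theorem mem_closure_G02_of_odd_of_modEq_two_pow {N : ℕ} (hN : Odd N) {g : SL(2, ℤ)}
    (hg : g ∈ Gamma0 N) (hodd : Odd (g 0 0)) {n j : ℕ} (hb : g 0 1 ≡ 2 ^ n [ZMOD g 0 0])
    (ha : g 0 0 ≡ 2 ^ j [ZMOD N]) : g ∈ Subgroup.closure (G02 N) := by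
  obtain ⟨s, hs⟩ := Int.exists_two_pow_mul_modEq_one hodd hb
  obtain ⟨k, hk⟩ :=
    Int.exists_two_pow_mul_modEq_one (m := N) (by exact_mod_cast hN) (Int.ModEq.refl (2 ^ s))
  have hcop : IsCoprime (g 0 0) (2 ^ s * 2 ^ (k + j)) := by
    rw [← pow_add]; exact (Int.isCoprime_two_right.mpr hodd).pow_right
  obtain ⟨w, hw00, hw10, hrow⟩ := SpecialLinearGroup.exists_SL2_of_mul_modEq_one hs hcop
  have hw : w ∈ G02 N := by
    refine ⟨mem_Gamma0_iff_dvd.mpr ?_, s, hw00⟩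
    rw [hw10, ← Int.modEq_iff_dvd]
    calc 2 ^ s * 2 ^ (k + j) = 2 ^ k * 2 ^ s * 2 ^ j := by ring
      _ ≡ 1 * 2 ^ j [ZMOD N] := hk.mul_right _
      _ = 2 ^ j := one_mul _
      _ ≡ g 0 0 [ZMOD N] := ha.symm
  have hgw : g * w⁻¹ ∈ G02 N :=
    ⟨mul_mem hg (inv_mem hw.1), k + j, by rw [SpecialLinearGroup.mul_inv_apply_zero_zero, hrow]⟩
  simpa using mul_mem (Subgroup.subset_closure hgw) (Subgroup.subset_closure hw)

def lowerUnipotent (c : ℤ) : SL(2, ℤ) :=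
  ⟨!![1, 0; c, 1], by simp [det_fin_two_of]⟩

@[simp]
theorem coe_lowerUnipotent (c : ℤ) :
    (lowerUnipotent c : Matrix (Fin 2) (Fin 2) ℤ) = !![1, 0; c, 1] :=
  rfl

theorem mul_lowerUnipotent_apply_zero_zero (x : SL(2, ℤ)) (c : ℤ) :
    (x * lowerUnipotent c) 0 0 = x 0 0 + x 0 1 * c := by
  simp [Matrix.mul_apply, Fin.sum_univ_two]

theorem mul_lowerUnipotent_apply_zero_one (x : SL(2, ℤ)) (c : ℤ) :
    (x * lowerUnipotent c) 0 1 = x 0 1 := by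
  simp [Matrix.mul_apply, Fin.sum_univ_two]

theorem lowerUnipotent_mem_G02 (N : ℕ) (k : ℤ) : lowerUnipotent (N * k) ∈ G02 N :=
  ⟨mem_Gamma0_iff_dvd.mpr (dvd_mul_right _ _), 0, rfl⟩

theorem Gamma02_subset_closure_G02 (hArtin : WeakArtin) {N : ℕ} (hN : Odd N) :
    Gamma02 N ⊆ Subgroup.closure (G02 N) := by
  rintro x ⟨hx, j, hj⟩
  have hN' : Odd (N : ℤ) := by exact_mod_cast hN
  have hrow : IsCoprime (x 0 0) (x 0 1) :=
    ⟨x 1 1, -x 1 0, by linear_combination x.det_fin_two_eq_one⟩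
  obtain ⟨t, ht⟩ := Int.exists_odd_add_mul hrow hN'
  set a := x 0 0 + x 0 1 * (N * t)
  have ha : a ≡ 2 ^ j [ZMOD N] :=
    calc a = x 0 0 + N * (x 0 1 * t) := by ring
      _ ≡ x 0 0 [ZMOD N] := Int.modEq_add_fac_self
      _ ≡ 2 ^ j [ZMOD N] := hj
  have hab : IsCoprime a (x 0 1) := hrow.add_mul_left_left _
  have hcop : IsCoprime a (x 0 1 * (2 * N * x 0 1)) :=
    hab.mul_right (((Int.isCoprime_two_right.mpr ht).mul_right
      (Int.isCoprime_of_modEq_two_pow hN' ha)).mul_right hab)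
  -- `lowerUnipotent (2 * N * m)` adds `m * (2 * N * x 0 1)` to `a`; the factor `2` keeps it odd.
  obtain ⟨m, n, hmn⟩ := hArtin (x 0 1) a (2 * N * x 0 1) (Int.isCoprime_iff_gcd_eq_one.mp hcop)
  have hL := lowerUnipotent_mem_G02 N (t + 2 * m)
  have hP00 : (x * lowerUnipotent (N * (t + 2 * m))) 0 0 = a + m * (2 * N * x 0 1) := by
    rw [mul_lowerUnipotent_apply_zero_zero]; ring
  have hP : x * lowerUnipotent (N * (t + 2 * m)) ∈ Subgroup.closure (G02 N) := by
    refine mem_closure_G02_of_odd_of_modEq_two_pow (n := n) (j := j) hN (mul_mem hx hL.1)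
      ?_ ?_ ?_ <;> rw [hP00]
    · exact ht.add_even (((even_two_mul _).mul_right _).mul_left _)
    · rw [mul_lowerUnipotent_apply_zero_one]; exact hmn
    · calc a + m * (2 * N * x 0 1) = a + N * (2 * m * x 0 1) := by ring
        _ ≡ a [ZMOD N] := Int.modEq_add_fac_self
        _ ≡ 2 ^ j [ZMOD N] := ha
  simpa using mul_mem hP (inv_mem (Subgroup.subset_closure hL))

theorem closure_G02_eq_Gamma02_general (N : ℕ) (hNodd : Odd N) (hArtin : WeakArtin) :
    (Subgroup.closure (G02 N) : Set SL(2, ℤ)) = Gamma02 N := by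
  refine subset_antisymm ?_ (Gamma02_subset_closure_G02 hArtin hNodd)
  exact (Subgroup.closure_le (Gamma02Subgroup hNodd)).mpr (G02_subset_Gamma02 N)

/-- Assuming the weak Artin hypothesis, the subgroup of `SL(2, ℤ)` generated by `G_{0,2}(N)`
equals `Γ_{0,2}(N)`. -/
theorem closure_G02_eq_Gamma02 (N : ℕ) (hN : 0 < N) (hNodd : Odd N) (hArtin : WeakArtin) :
    (Subgroup.closure (G02 N) : Set SL(2, ℤ)) = Gamma02 N :=
  closure_G02_eq_Gamma02_general N hNodd hArtin
end

section
/- Let N be an odd positive integer, k an integer, ε ∈ {1, −1}, a₂ ∈ ℂ, and f : ℍ → ℂ. If f ∣[k] H_N = ε • f and f ∣[k] [[2,0],[0,1]] + f ∣[k] [[1,0],[0,2]] + f ∣[k] [[1,1],[0,2]] = a₂ • f, then f ∣[k] M₂ = f, where M₂ = [[2, −1], [−N, (N+1)/2]]. -/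
open Matrix UpperHalfPlane Complex
open scoped ModularForm MatrixGroups

/-! Conjugation by `H_N` swaps `[[2,0],[0,1]]` and `[[1,0],[0,2]]` and carries `[[1,1],[0,2]]`
to `δ = [[2,0],[-N,1]]`. Slashing the `T₂`-relation by `H_N` and using `f ∣ H_N = ε • f` therefore
gives the same relation with `δ` in place of `[[1,1],[0,2]]`, so `f ∣ [[1,1],[0,2]] = f ∣ δ`
(when `ε = 0`, `f` itself vanishes). Since `M₂ * [[1,1],[0,2]] = δ`, this says `f ∣ M₂ = f`. -/

open ModularForm SlashAction

section SlashGLPos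

variable {k : ℤ} {f : ℍ → ℂ}

lemma glpos_smul_slash (g : GL(2, ℝ)⁺) (c : ℂ) :
    (c • f) ∣[k] (g : GL (Fin 2) ℝ) = c • f ∣[k] (g : GL (Fin 2) ℝ) := by
  rw [smul_slash, σ, if_pos ((mem_glpos _).mp g.2)]
  rfl

lemma slash_slash_eq_smul_slash_of_mul_eq {ε : ℂ} {H g g' : GL(2, ℝ)⁺}
    (hH : f ∣[k] (H : GL (Fin 2) ℝ) = ε • f) (hg : g * H = H * g') :
    (f ∣[k] (g : GL (Fin 2) ℝ)) ∣[k] (H : GL (Fin 2) ℝ) = ε • f ∣[k] (g' : GL (Fin 2) ℝ) := by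
  rw [← slash_mul, ← Subgroup.coe_mul, hg, Subgroup.coe_mul, slash_mul, hH, glpos_smul_slash]

lemma slash_eq_slash_of_conj_relation {ε a : ℂ} {H α β γ δ : GL(2, ℝ)⁺}
    (hH : f ∣[k] (H : GL (Fin 2) ℝ) = ε • f) (hα : α * H = H * β) (hβ : β * H = H * α)
    (hγ : γ * H = H * δ)
    (hT : f ∣[k] (α : GL (Fin 2) ℝ) + f ∣[k] (β : GL (Fin 2) ℝ) + f ∣[k] (γ : GL (Fin 2) ℝ)
      = a • f) :
    f ∣[k] (γ : GL (Fin 2) ℝ) = f ∣[k] (δ : GL (Fin 2) ℝ) := by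
  rcases eq_or_ne ε 0 with rfl | hε
  · rw [zero_smul, slash_eq_zero_iff] at hH
    simp only [hH, zero_slash]
  have hrel : ε • (f ∣[k] (β : GL (Fin 2) ℝ) + f ∣[k] (α : GL (Fin 2) ℝ)
      + f ∣[k] (δ : GL (Fin 2) ℝ)) = ε • (f ∣[k] (α : GL (Fin 2) ℝ) + f ∣[k] (β : GL (Fin 2) ℝ)
      + f ∣[k] (γ : GL (Fin 2) ℝ)) :=
    calc _ = (f ∣[k] (α : GL (Fin 2) ℝ) + f ∣[k] (β : GL (Fin 2) ℝ)
          + f ∣[k] (γ : GL (Fin 2) ℝ)) ∣[k] (H : GL (Fin 2) ℝ) := by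
            simp only [add_slash, slash_slash_eq_smul_slash_of_mul_eq hH hα,
              slash_slash_eq_smul_slash_of_mul_eq hH hβ, slash_slash_eq_smul_slash_of_mul_eq hH hγ,
              smul_add]
      _ = _ := by rw [hT, glpos_smul_slash, hH, smul_comm]
  rw [smul_right_injective _ hε |>.eq_iff, add_comm (f ∣[k] (β : GL (Fin 2) ℝ))] at hrel
  exact (add_left_cancel hrel).symm

end SlashGLPos

lemma SlashAction.slash_eq_self_of_mul_eq {β G α : Type*} [Group G] [AddMonoid α]
    [SlashAction β G α] {k : β} {f : α} {m g g' : G} (hmg : m * g = g')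
    (h : f ∣[k] g = f ∣[k] g') : f ∣[k] m = f := by
  have := congrArg (· ∣[k] g⁻¹) h
  simpa [← slash_mul, ← hmg, mul_assoc] using this.symm

/-- If `f ∣[k] H_N = ε • f` and
`f ∣[k] [[2,0],[0,1]] + f ∣[k] [[1,0],[0,2]] + f ∣[k] [[1,1],[0,2]] = a₂ • f`,
then `f ∣[k] M₂ = f` where `M₂ = [[2, -1], [-N, (N+1)/2]]`. -/
theorem slash_M2_eq_self (N : ℕ) (hN : 0 < N) (k : ℤ) (ε : ℂ)
    (a₂ : ℂ) (f : ℍ → ℂ)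
    (hH : f ∣[k] (glp 0 (-1) (N:ℝ) 0
        (by simpa using (by exact_mod_cast hN : (0:ℝ) < N)) : GL (Fin 2) ℝ) = ε • f)
    (hT2 : f ∣[k] (glp 2 0 0 1 (by norm_num) : GL (Fin 2) ℝ) + f ∣[k] (glp 1 0 0 2 (by norm_num) : GL (Fin 2) ℝ)
        + f ∣[k] (glp 1 1 0 2 (by norm_num) : GL (Fin 2) ℝ) = a₂ • f) :
    f ∣[k] (glp 2 (-1) (-(N:ℝ)) (((N:ℝ) + 1)/2)
      (by
        have h : (2:ℝ) * (((N:ℝ) + 1)/2) - (-1) * (-(N:ℝ)) = 1 := by ring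
        linarith) : GL (Fin 2) ℝ) = f := by
  set H := glp 0 (-1) (N:ℝ) 0 (by simpa using (by exact_mod_cast hN : (0:ℝ) < N))
  set α := glp 2 0 0 1 (by norm_num)
  set β := glp 1 0 0 2 (by norm_num)
  set γ := glp 1 1 0 2 (by norm_num)
  set M₂ := glp 2 (-1) (-(N:ℝ)) (((N:ℝ) + 1)/2) (by linarith)
  let δ := glp 2 0 (-(N:ℝ)) 1 (by norm_num)
  obtain ⟨hα, hβ, hγ, hM₂⟩ : α * H = H * β ∧ β * H = H * α ∧ γ * H = H * δ ∧ M₂ * γ = δ := by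
    refine ⟨?_, ?_, ?_, ?_⟩ <;> ext i j : 3 <;> fin_cases i <;> fin_cases j <;>
      simp [H, α, β, γ, δ, M₂, glp, Matrix.mul_apply] <;> ring
  exact slash_eq_self_of_mul_eq (congrArg Subtype.val hM₂)
    (slash_eq_slash_of_conj_relation hH hα hβ hγ hT2)
end

section
/- Let N be an odd positive integer, k an integer, a₂ ∈ ℂ, n ≥ 1 an integer, and α, β odd integers with 2^n ∣ αβN + 1. Let f : ℍ → ℂ satisfy f ∣[k] T = f, f ∣[k] W_N = f, f ∣[k] [[2,0],[0,1]] + f ∣[k] [[1,0],[0,2]] + f ∣[k] [[1,1],[0,2]] = a₂ • f, f ∣[k] [[2^{n−1}, α],[βN, (αβN+1)/2^{n−1}]] = f, and f ∣[k] [[2^n, α],[βN, (αβN+1)/2^n]] = f. Then f ∣[k] [[2^{n+1}, 2α],[βN, (αβN+1)/2^n]] + f ∣[k] [[2^n + βN, α + (αβN+1)/2^n],[2βN, (αβN+1)/2^{n−1}]] = f ∣[k] [[1,0],[0,2]] + f ∣[k] [[1,1],[0,2]]. -/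
open Matrix UpperHalfPlane Complex
open scoped ModularForm MatrixGroups

lemma glp_congr {a b c d a' b' c' d' : ℝ} {h : 0 < a * d - b * c} {h' : 0 < a' * d' - b' * c'}
    (ha : a = a') (hb : b = b') (hc : c = c') (hd : d = d') :
    glp a b c d h = glp a' b' c' d' h' := by
  subst ha hb hc hd; rfl

lemma coe_glp_mul (a b c d a' b' c' d' : ℝ) (h : 0 < a * d - b * c)
    (h' : 0 < a' * d' - b' * c') :
    (glp a b c d h : GL (Fin 2) ℝ) * glp a' b' c' d' h'
      = glp (a * a' + b * c') (a * b' + b * d') (c * a' + d * c') (c * b' + d * d')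
        (by nlinarith [mul_pos h h']) :=
  Units.ext <| Matrix.mul_fin_two a b c d a' b' c' d'

lemma coe_glp_mul_eq {a b c d a' b' c' d' p q r s : ℝ} {h : 0 < a * d - b * c}
    {h' : 0 < a' * d' - b' * c'} {h'' : 0 < p * s - q * r}
    (hp : a * a' + b * c' = p) (hq : a * b' + b * d' = q)
    (hr : c * a' + d * c' = r) (hs : c * b' + d * d' = s) :
    (glp a b c d h : GL (Fin 2) ℝ) * glp a' b' c' d' h' = glp p q r s h'' := by
  rw [coe_glp_mul, glp_congr hp hq hr hs]

lemma coe_glp_mul_eq_coe_glp_mul {a b c d a' b' c' d' e f g i e' f' g' i' : ℝ}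
    {h₁ : 0 < a * d - b * c} {h₂ : 0 < a' * d' - b' * c'}
    {h₃ : 0 < e * i - f * g} {h₄ : 0 < e' * i' - f' * g'}
    (hp : a * a' + b * c' = e * e' + f * g') (hq : a * b' + b * d' = e * f' + f * i')
    (hr : c * a' + d * c' = g * e' + i * g') (hs : c * b' + d * d' = g * f' + i * i') :
    (glp a b c d h₁ : GL (Fin 2) ℝ) * glp a' b' c' d' h₂
      = (glp e f g i h₃ : GL (Fin 2) ℝ) * glp e' f' g' i' h₄ := by
  rw [coe_glp_mul, coe_glp_mul, glp_congr hp hq hr hs]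

lemma smul_slash_of_mem_glpos (k : ℤ) (M : GL(2, ℝ)⁺) (f : ℍ → ℂ) (c : ℂ) :
    (c • f) ∣[k] (M : GL (Fin 2) ℝ) = c • f ∣[k] (M : GL (Fin 2) ℝ) := by
  have hdet : 0 < (M : GL (Fin 2) ℝ).det.val := (Matrix.mem_glpos _).mp M.2
  rw [ModularForm.smul_slash, σ, if_pos hdet, ContinuousAlgEquiv.refl_apply]

theorem slash_add_slash_eq_of_hecke_relation {k : ℤ} {f : ℍ → ℂ} {c : ℂ}
    {A B C M' G₁ G₂ : GL (Fin 2) ℝ} {M : GL(2, ℝ)⁺}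
    (hHecke : f ∣[k] A + f ∣[k] B + f ∣[k] C = c • f)
    (hM : f ∣[k] (M : GL (Fin 2) ℝ) = f) (hM' : f ∣[k] M' = f)
    (hAM : A * M = G₁) (hBM : B * M = M' * A) (hCM : C * M = G₂) :
    f ∣[k] G₁ + f ∣[k] G₂ = f ∣[k] B + f ∣[k] C := by
  have hB : f ∣[k] (B * M) = f ∣[k] A := by rw [hBM, SlashAction.slash_mul, hM']
  have hsum := congrArg (· ∣[k] (M : GL (Fin 2) ℝ)) hHecke
  simp only [SlashAction.add_slash, ← SlashAction.slash_mul, smul_slash_of_mem_glpos, hM,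
    hAM, hB, hCM] at hsum
  rw [← hHecke] at hsum
  linear_combination hsum

lemma two_mul_div_two_pow_eq_div_two_pow_pred {K : Type*} [Field K] [NeZero (2 : K)] (x : K)
    {n : ℕ} (hn : 1 ≤ n) : 2 * (x / 2 ^ n) = x / 2 ^ (n - 1) := by
  obtain ⟨m, rfl⟩ := Nat.exists_eq_add_of_le' hn
  rw [Nat.add_sub_cancel, pow_succ]
  field_simp

/-- The inductive step of "the process":  assuming invariance under `T`, `W_N`, the weight-`k`
Hecke relation at `2`, and invariance under the matrices of level `2^(n-1)` and `2^n`, four slashed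
terms remain. -/
theorem slash_induction_step (N : ℕ) (k : ℤ) (a₂ : ℂ)
    (n : ℕ) (hn : 1 ≤ n) (α β : ℤ) (f : ℍ → ℂ)
    (hT2 : f ∣[k] (glp 2 0 0 1 (by norm_num) : GL (Fin 2) ℝ) + f ∣[k] (glp 1 0 0 2 (by norm_num) : GL (Fin 2) ℝ)
        + f ∣[k] (glp 1 1 0 2 (by norm_num) : GL (Fin 2) ℝ) = a₂ • f)
    (hMn1 : f ∣[k] (glp ((2:ℝ)^(n-1)) (α:ℝ) ((β:ℝ)*(N:ℝ)) (((α:ℝ)*(β:ℝ)*(N:ℝ)+1)/(2:ℝ)^(n-1))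
        (by
          have hne : ((2:ℝ)^(n-1)) ≠ 0 := by positivity
          have h : (2:ℝ)^(n-1) * (((α:ℝ)*(β:ℝ)*(N:ℝ)+1)/(2:ℝ)^(n-1))
              - (α:ℝ) * ((β:ℝ)*(N:ℝ)) = 1 := by field_simp; ring
          linarith) : GL (Fin 2) ℝ) = f)
    (hMn : f ∣[k] (glp ((2:ℝ)^n) (α:ℝ) ((β:ℝ)*(N:ℝ)) (((α:ℝ)*(β:ℝ)*(N:ℝ)+1)/(2:ℝ)^n)
        (by
          have hne : ((2:ℝ)^n) ≠ 0 := by positivity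
          have h : (2:ℝ)^n * (((α:ℝ)*(β:ℝ)*(N:ℝ)+1)/(2:ℝ)^n)
              - (α:ℝ) * ((β:ℝ)*(N:ℝ)) = 1 := by field_simp; ring
          linarith) : GL (Fin 2) ℝ) = f) :
    f ∣[k] (glp ((2:ℝ)^(n+1)) (2*(α:ℝ)) ((β:ℝ)*(N:ℝ)) (((α:ℝ)*(β:ℝ)*(N:ℝ)+1)/(2:ℝ)^n)
        (by
          have hne : ((2:ℝ)^n) ≠ 0 := by positivity
          have h : (2:ℝ)^(n+1) * (((α:ℝ)*(β:ℝ)*(N:ℝ)+1)/(2:ℝ)^n)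
              - (2*(α:ℝ)) * ((β:ℝ)*(N:ℝ)) = 2 := by field_simp; ring
          linarith) : GL (Fin 2) ℝ)
      + f ∣[k] (glp ((2:ℝ)^n + (β:ℝ)*(N:ℝ)) ((α:ℝ) + ((α:ℝ)*(β:ℝ)*(N:ℝ)+1)/(2:ℝ)^n)
          (2*((β:ℝ)*(N:ℝ))) (((α:ℝ)*(β:ℝ)*(N:ℝ)+1)/(2:ℝ)^(n-1))
        (by
          have hs : (2:ℝ)^n = 2 * (2:ℝ)^(n-1) := by rw [← pow_succ']; congr 1; omega
          have hne : ((2:ℝ)^(n-1)) ≠ 0 := by positivity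
          have h : ((2:ℝ)^n + (β:ℝ)*(N:ℝ)) * (((α:ℝ)*(β:ℝ)*(N:ℝ)+1)/(2:ℝ)^(n-1))
              - ((α:ℝ) + ((α:ℝ)*(β:ℝ)*(N:ℝ)+1)/(2:ℝ)^n) * (2*((β:ℝ)*(N:ℝ))) = 2 := by
            rw [hs]; field_simp; ring
          linarith) : GL (Fin 2) ℝ)
      = f ∣[k] (glp 1 0 0 2 (by norm_num) : GL (Fin 2) ℝ) + f ∣[k] (glp 1 1 0 2 (by norm_num) : GL (Fin 2) ℝ) := by
  have hpow : (2:ℝ) ^ n = 2 ^ (n - 1) * 2 := by rw [← pow_succ, Nat.sub_add_cancel hn]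
  have hhalf := two_mul_div_two_pow_eq_div_two_pow_pred ((α:ℝ) * β * N + 1) hn
  refine slash_add_slash_eq_of_hecke_relation hT2 hMn hMn1 ?_ ?_ ?_
  · exact coe_glp_mul_eq (by ring) (by ring) (by ring) (by ring)
  · exact coe_glp_mul_eq_coe_glp_mul (by linear_combination hpow) (by ring) (by ring)
      (by linear_combination hhalf)
  · exact coe_glp_mul_eq (by ring) (by ring) (by ring) (by linear_combination hhalf)
end

section
/- Let N be an odd positive integer, n ≥ 1 an integer, and α, β integers such that 2^n ∣ αβN + 1. Then exactly one of the following holds: (i) 2^{n+1} divides both αβN + 1 and (α−2^n)(β−2^n)N + 1; or (ii) 2^{n+1} divides both (α−2^n)βN + 1 and α(β−2^n)N + 1. Equivalently, exactly one of the two pairs of matrices ([[2^{n+1}, α],[βN, (αβN+1)/2^{n+1}]], [[2^{n+1}, α−2^n],[(β−2^n)N, ((α−2^n)(β−2^n)N+1)/2^{n+1}]]) and ([[2^{n+1}, α−2^n],[βN, ((α−2^n)βN+1)/2^{n+1}]], [[2^{n+1}, α],[(β−2^n)N, (α(β−2^n)N+1)/2^{n+1}]]) consists of integer matrices (which then lie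 in Γ_0(N)). -/
/-! Since `αβN + 1` is even, `α`, `β` and `N` are odd. Write `αβN + 1 = 2^n k`. Each of the four
numbers is `2^n` times `k` shifted by a combination of the odd numbers `αN`, `βN` and the even
number `2^n N`: the shifts in (i) are even and those in (ii) are odd. So (i) holds exactly when `k`
is even and (ii) exactly when `k` is odd. -/

theorem pow_succ_dvd_pow_mul_iff {M : Type*} [CommMonoidWithZero M] [IsCancelMulZero M] {a : M}
    (ha : a ≠ 0) (n : ℕ) (m : M) : a ^ (n + 1) ∣ a ^ n * m ↔ a ∣ m := by
  rw [pow_succ]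
  exact mul_dvd_mul_iff_left (pow_ne_zero n ha)

theorem Int.xor_even_of_odd_of_odd_of_even {a b c : ℤ} (ha : Odd a) (hb : Odd b) (hc : Even c)
    (k : ℤ) : Xor (Even k ∧ Even (k - a - b + c)) (Even (k - b) ∧ Even (k - a)) := by
  rw [← Int.not_even_iff_odd] at ha hb
  by_cases hk : Even k <;> simp [Int.even_sub, Int.even_add, ha, hb, hc, hk]

theorem exactly_one_integer_pair_general (N : ℕ)
    (n : ℕ) (hn : 1 ≤ n) (α β : ℤ) (h : ((2:ℤ)^n) ∣ α * β * N + 1) :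
    Xor' (((2:ℤ)^(n+1)) ∣ α * β * N + 1 ∧
          ((2:ℤ)^(n+1)) ∣ (α - 2^n) * (β - 2^n) * N + 1)
         (((2:ℤ)^(n+1)) ∣ (α - 2^n) * β * N + 1 ∧
          ((2:ℤ)^(n+1)) ∣ α * (β - 2^n) * N + 1) := by
  obtain ⟨k, hk⟩ := h
  have hpow : Even ((2:ℤ) ^ n) := Int.even_pow.mpr ⟨even_two, by omega⟩
  have hodd : Odd (α * β * N) := by
    rw [← Int.not_even_iff_odd, ← Int.even_add_one, hk]
    exact hpow.mul_right k
  obtain ⟨⟨hα, hβ⟩, hN⟩ := Int.odd_mul.mp hodd |>.imp_left Int.odd_mul.mp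
  rw [hk, show (α - 2^n) * (β - 2^n) * N + 1 = 2^n * (k - α * N - β * N + 2^n * N) by
      linear_combination hk,
    show (α - 2^n) * β * N + 1 = 2^n * (k - β * N) by linear_combination hk,
    show α * (β - 2^n) * N + 1 = 2^n * (k - α * N) by linear_combination hk]
  simp only [pow_succ_dvd_pow_mul_iff (two_ne_zero (α := ℤ)), ← even_iff_two_dvd]
  exact Int.xor_even_of_odd_of_odd_of_even (hα.mul hN) (hβ.mul hN) (hpow.mul_right _) k

/-- If `N` is odd, `n ≥ 1` and `2^n ∣ αβN + 1`, then exactly one of the following holds: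
(i) `2^(n+1)` divides both `αβN + 1` and `(α-2^n)(β-2^n)N + 1`; or
(ii) `2^(n+1)` divides both `(α-2^n)βN + 1` and `α(β-2^n)N + 1`. -/
theorem exactly_one_integer_pair (N : ℕ) (hN : 0 < N) (hNodd : Odd N)
    (n : ℕ) (hn : 1 ≤ n) (α β : ℤ) (h : ((2:ℤ)^n) ∣ α * β * N + 1) :
    Xor' (((2:ℤ)^(n+1)) ∣ α * β * N + 1 ∧
          ((2:ℤ)^(n+1)) ∣ (α - 2^n) * (β - 2^n) * N + 1)
         (((2:ℤ)^(n+1)) ∣ (α - 2^n) * β * N + 1 ∧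
          ((2:ℤ)^(n+1)) ∣ α * (β - 2^n) * N + 1) :=
  exactly_one_integer_pair_general N n hn α β h
end

section
/- Let N be a positive integer and let ψ ∈ G_{0,2}(N). Then there exist integers k and ℓ such that W_N^k · ψ · T^ℓ ∈ L_{0,2}(N). Consequently G_{0,2}(N) is contained in the subgroup of SL(2,ℤ) generated by {T, W_N} ∪ L_{0,2}(N). -/
open Matrix CongruenceSubgroup
open scoped MatrixGroups

/-!
Left multiplication by `W_N^k` adds `kNa` to the lower-left entry `c`, right multiplication by
`T^ℓ` adds `ℓa` to the upper-right entry `b`, and neither changes `a`. Since `N ∣ c`, replacing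
`b` and `c / N` by their absolutely least residues modulo `a` gives `2|b| ≤ a` and `2|c| ≤ aN`.
-/

/-- The matrix `T = [[1,1],[0,1]]` in `SL(2, ℤ)`. -/
def T : SL(2, ℤ) := ⟨!![1, 1; 0, 1], by norm_num [Matrix.det_fin_two_of]⟩

/-- The matrix `W_N = [[1,0],[N,1]]` in `SL(2, ℤ)`. -/
def W (N : ℕ) : SL(2, ℤ) := ⟨!![1, 0; (N:ℤ), 1], by norm_num [Matrix.det_fin_two_of]⟩

/-- `L_{0,2}(N)`: matrices `[[a,b],[c,d]]` in `G_{0,2}(N)` with `2|b| ≤ a` and `2|c| ≤ aN`. -/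
def L02 (N : ℕ) : Set SL(2, ℤ) :=
  {γ | γ ∈ G02 N ∧
    2 * |(γ : Matrix (Fin 2) (Fin 2) ℤ) 0 1| ≤ (γ : Matrix (Fin 2) (Fin 2) ℤ) 0 0 ∧
    2 * |(γ : Matrix (Fin 2) (Fin 2) ℤ) 1 0| ≤ (γ : Matrix (Fin 2) (Fin 2) ℤ) 0 0 * N}


lemma Int.exists_two_mul_abs_add_mul_le (x : ℤ) {m : ℕ} (hm : 0 < m) :
    ∃ t : ℤ, 2 * |x + t * m| ≤ m := by
  refine ⟨-x.bdiv m, ?_⟩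
  have hx := x.bmod_add_bdiv' m
  have hlo := Int.le_bmod (x := x) hm
  have hhi := Int.bmod_le (x := x) hm
  rw [show x + -x.bdiv m * m = x.bmod m by linarith]
  cases abs_cases (x.bmod m) <;> omega

lemma T_mem_Gamma0 (N : ℕ) : T ∈ Gamma0 N := by
  rw [Gamma0_mem]; simp [T]

lemma W_mem_Gamma0 (N : ℕ) : W N ∈ Gamma0 N := by
  rw [Gamma0_mem]; simp [W]

lemma coe_T_zpow (l : ℤ) : ((T ^ l : SL(2, ℤ)) : Matrix (Fin 2) (Fin 2) ℤ) = !![1, l; 0, 1] :=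
  ModularGroup.coe_T_zpow l

lemma coe_W_zpow (N : ℕ) (k : ℤ) :
    ((W N ^ k : SL(2, ℤ)) : Matrix (Fin 2) (Fin 2) ℤ) = !![1, 0; k * N, 1] := by
  induction k using Int.induction_on with
  | zero => simp [one_fin_two]
  | succ k ih =>
    rw [_root_.zpow_add_one, Matrix.SpecialLinearGroup.coe_mul, ih]
    simp [W]; ring
  | pred k ih =>
    rw [_root_.zpow_sub_one, Matrix.SpecialLinearGroup.coe_mul, Matrix.SpecialLinearGroup.coe_inv,
      ih]
    simp [W, adjugate_fin_two]; ring

lemma coe_W_zpow_mul_mul_T_zpow (N : ℕ) (k l : ℤ) (γ : SL(2, ℤ)) :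
    ((W N ^ k * γ * T ^ l : SL(2, ℤ)) : Matrix (Fin 2) (Fin 2) ℤ) =
      !![γ 0 0, γ 0 1 + l * γ 0 0;
        γ 1 0 + k * N * γ 0 0, (γ 1 0 + k * N * γ 0 0) * l + k * N * γ 0 1 + γ 1 1] := by
  rw [Matrix.SpecialLinearGroup.coe_mul, Matrix.SpecialLinearGroup.coe_mul, coe_W_zpow,
    coe_T_zpow]
  ext i j
  fin_cases i <;> fin_cases j <;> simp [mul_apply, vecMul, dotProduct, Fin.sum_univ_two] <;> ring

theorem exists_W_zpow_mul_mul_T_zpow_mem_L02 (N : ℕ) {ψ : SL(2, ℤ)} (hψ : ψ ∈ G02 N) :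
    ∃ k l : ℤ, W N ^ k * ψ * T ^ l ∈ L02 N := by
  obtain ⟨hΓ, n, ha⟩ := hψ
  obtain ⟨c, hc⟩ : (N : ℤ) ∣ ψ 1 0 := (ZMod.intCast_zmod_eq_zero_iff_dvd _ _).mp (Gamma0_mem.mp hΓ)
  obtain ⟨l, hl⟩ := Int.exists_two_mul_abs_add_mul_le (ψ 0 1) (m := 2 ^ n) (by positivity)
  obtain ⟨k, hk⟩ := Int.exists_two_mul_abs_add_mul_le c (m := 2 ^ n) (by positivity)
  push_cast at hl hk
  have hΓ' : W N ^ k * ψ * T ^ l ∈ Gamma0 N :=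
    mul_mem (mul_mem (zpow_mem (W_mem_Gamma0 N) k) hΓ) (zpow_mem (T_mem_Gamma0 N) l)
  refine ⟨k, l, ⟨hΓ', n, ?_⟩, ?_, ?_⟩ <;>
    simp only [coe_W_zpow_mul_mul_T_zpow, of_apply, cons_val', cons_val_zero, cons_val_one,
      empty_val', cons_val_fin_one]
  · exact ha
  · rwa [ha]
  · rw [ha, hc]
    calc 2 * |N * c + k * N * 2 ^ n| = N * (2 * |c + k * 2 ^ n|) := by
          rw [show (N : ℤ) * c + k * N * 2 ^ n = N * (c + k * 2 ^ n) by ring, abs_mul,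
            Nat.abs_cast]
          ring
      _ ≤ N * 2 ^ n := mul_le_mul_of_nonneg_left hk N.cast_nonneg
      _ = 2 ^ n * N := mul_comm _ _

theorem G02_subset_closure_L02_general (N : ℕ) (ψ : SL(2, ℤ)) (hψ : ψ ∈ G02 N) :
    (∃ k l : ℤ, (W N)^k * ψ * T^l ∈ L02 N) ∧
    G02 N ⊆ (Subgroup.closure ({T, W N} ∪ L02 N) : Subgroup SL(2, ℤ)) := by
  refine ⟨exists_W_zpow_mul_mul_T_zpow_mem_L02 N hψ, fun γ hγ => ?_⟩
  obtain ⟨k, l, hL⟩ := exists_W_zpow_mul_mul_T_zpow_mem_L02 N hγ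
  have hT : T ∈ Subgroup.closure ({T, W N} ∪ L02 N) := Subgroup.subset_closure (by simp)
  have hW : W N ∈ Subgroup.closure ({T, W N} ∪ L02 N) := Subgroup.subset_closure (by simp)
  have hL' := Subgroup.subset_closure (Set.mem_union_right {T, W N} hL)
  rw [show γ = W N ^ (-k) * (W N ^ k * γ * T ^ l) * T ^ (-l) by group]
  exact mul_mem (mul_mem (zpow_mem hW _) hL') (zpow_mem hT _)

/-- Every `ψ ∈ G_{0,2}(N)` can be moved into `L_{0,2}(N)` by powers of `W_N` and `T`;
consequently `G_{0,2}(N)` lies in the subgroup generated by `{T, W_N} ∪ L_{0,2}(N)`. -/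
theorem G02_subset_closure_L02 (N : ℕ) (hN : 0 < N) (ψ : SL(2, ℤ)) (hψ : ψ ∈ G02 N) :
    (∃ k l : ℤ, (W N)^k * ψ * T^l ∈ L02 N) ∧
    G02 N ⊆ (Subgroup.closure ({T, W N} ∪ L02 N) : Subgroup SL(2, ℤ)) :=
  G02_subset_closure_L02_general N ψ hψ
end

section
/- Let N be an odd positive integer, n ≥ 2 an integer, and α, β odd integers with 2|α| ≤ 2^n, 2|β| ≤ 2^n, and 2^n ∣ αβN + 1, and set A = [[2^n, α],[βN, (αβN+1)/2^n]] ∈ SL(2,ℤ). Then there exist odd integers α₁, β₁ with 2|α₁| ≤ 2^{n−1}, 2|β₁| ≤ 2^{n−1}, α ≡ α₁ (mod 2^{n−1}), β ≡ β₁ (mod 2^{n−1}), together with exponents u, v ∈ {0, 1} and α' ∈ {α₁, α₁ − 2^{n−1}}, β' ∈ {β₁, β₁ − 2^{n−1}}, such that 2^n ∣ α'β'N + 1 and A = W_N^u · [[2^n, α'],[β'N, (α'β'N+1)/2^n]] · T^v. -/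
open Matrix CongruenceSubgroup
open scoped MatrixGroups

lemma coe_T_pow (v : ℕ) :
    ((T ^ v : SL(2, ℤ)) : Matrix (Fin 2) (Fin 2) ℤ) = !![1, (v : ℤ); 0, 1] := by
  induction v with
  | zero => ext i j; fin_cases i <;> fin_cases j <;> rfl
  | succ v ih =>
    rw [pow_succ, Matrix.SpecialLinearGroup.coe_mul, ih]
    ext i j; fin_cases i <;> fin_cases j <;> simp [T, add_comm]

lemma coe_W_pow (N u : ℕ) :
    ((W N ^ u : SL(2, ℤ)) : Matrix (Fin 2) (Fin 2) ℤ) = !![1, 0; (u : ℤ) * N, 1] := by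
  induction u with
  | zero => ext i j; fin_cases i <;> fin_cases j <;> simp
  | succ u ih =>
    rw [pow_succ, Matrix.SpecialLinearGroup.coe_mul, ih]
    ext i j; fin_cases i <;> fin_cases j <;> simp [W]; ring

lemma W_pow_mul_mul_T_pow_apply (N u v : ℕ) (B : SL(2, ℤ)) :
    (W N ^ u * B * T ^ v) 0 0 = B 0 0 ∧
    (W N ^ u * B * T ^ v) 0 1 = B 0 0 * v + B 0 1 ∧
    (W N ^ u * B * T ^ v) 1 0 = u * N * B 0 0 + B 1 0 := by
  simp only [Matrix.SpecialLinearGroup.coe_mul, coe_W_pow, coe_T_pow]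
  refine ⟨?_, ?_, ?_⟩ <;> simp [Matrix.mul_apply, Fin.sum_univ_two, Matrix.vecMul, dotProduct]

lemma SL2_ext_of_apply_zero_zero_ne_zero {R : Type*} [CommRing R] [IsDomain R]
    {A B : SL(2, R)} (h00 : A 0 0 = B 0 0) (h01 : A 0 1 = B 0 1) (h10 : A 1 0 = B 1 0)
    (hne : A 0 0 ≠ 0) : A = B := by
  have hA := A.det_coe
  have hB := B.det_coe
  rw [Matrix.det_fin_two] at hA hB
  have h11 : A 1 1 = B 1 1 :=
    mul_left_cancel₀ hne (by rw [h01, h10] at hA; rw [h00] at hA ⊢; linear_combination hA - hB)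
  ext i j
  fin_cases i <;> fin_cases j <;> assumption

lemma exists_SL2_of_dvd {q a b c : ℤ} (h : q ∣ a * b * c + 1) :
    ∃ B : SL(2, ℤ), (B : Matrix (Fin 2) (Fin 2) ℤ) = !![q, a; b * c, (a * b * c + 1) / q] := by
  refine ⟨⟨!![q, a; b * c, (a * b * c + 1) / q], ?_⟩, rfl⟩
  rw [Matrix.det_fin_two_of, Int.mul_ediv_cancel' h]
  ring

lemma dvd_sub_mul_mul_sub_mul_mul_add_one {q a b c : ℤ} (s t : ℤ) (h : q ∣ a * b * c + 1) :
    q ∣ (a - s * q) * (b - t * q) * c + 1 := by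
  have : (a - s * q) * (b - t * q) * c + 1 =
      a * b * c + 1 + q * ((s * t * q - s * b - t * a) * c) := by ring
  rw [this]
  exact h.add (dvd_mul_right _ _)

lemma exists_odd_rep_of_abs_le {m α : ℤ} (hm : Even m) (hα : Odd α) (hle : |α| ≤ m) :
    ∃ (α₁ : ℤ) (v : ℕ), Odd α₁ ∧ 2 * |α₁| ≤ m ∧ α ≡ α₁ [ZMOD m] ∧ (v = 0 ∨ v = 1) ∧
      (α - v * (2 * m) = α₁ ∨ α - v * (2 * m) = α₁ - m) := by
  have two_mul_abs_le {x : ℤ} (hlo : -m ≤ 2 * x) (hhi : 2 * x ≤ m) : 2 * |x| ≤ m := by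
    rw [← abs_two, ← abs_mul]; exact abs_le.mpr ⟨hlo, hhi⟩
  obtain ⟨hlo, hhi⟩ := abs_le.mp hle
  by_cases hbig : m < 2 * α
  · exact ⟨α - m, 1, hα.sub_even hm, two_mul_abs_le (by linarith) (by linarith),
      (Int.modEq_iff_dvd.mpr ⟨1, by ring⟩).symm, Or.inr rfl, Or.inr (by push_cast; ring)⟩
  by_cases hsmall : 2 * α < -m
  · exact ⟨α + m, 0, hα.add_even hm, two_mul_abs_le (by linarith) (by linarith),
      (Int.modEq_iff_dvd.mpr ⟨-1, by ring⟩).symm, Or.inl rfl, Or.inr (by push_cast; ring)⟩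
  · exact ⟨α, 0, hα, two_mul_abs_le (by linarith) (by linarith), Int.ModEq.refl _, Or.inl rfl,
      Or.inl (by push_cast; ring)⟩

theorem level_reduction_general (N : ℕ) (n : ℕ) (hn : 2 ≤ n)
    (α β : ℤ) (hα : Odd α) (hβ : Odd β)
    (hαle : 2 * |α| ≤ 2^n) (hβle : 2 * |β| ≤ 2^n) (hdvd : ((2:ℤ)^n) ∣ α * β * N + 1)
    (A : SL(2, ℤ))
    (hA : (A : Matrix (Fin 2) (Fin 2) ℤ) = !![2^n, α; β * N, (α * β * N + 1) / 2^n]) :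
    ∃ α₁ β₁ : ℤ, Odd α₁ ∧ Odd β₁ ∧ 2 * |α₁| ≤ 2^(n-1) ∧ 2 * |β₁| ≤ 2^(n-1) ∧
      α ≡ α₁ [ZMOD ((2:ℤ)^(n-1))] ∧ β ≡ β₁ [ZMOD ((2:ℤ)^(n-1))] ∧
      ∃ u v : ℕ, (u = 0 ∨ u = 1) ∧ (v = 0 ∨ v = 1) ∧
        ∃ α' β' : ℤ, (α' = α₁ ∨ α' = α₁ - 2^(n-1)) ∧ (β' = β₁ ∨ β' = β₁ - 2^(n-1)) ∧
          ((2:ℤ)^n) ∣ α' * β' * N + 1 ∧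
          ∃ B : SL(2, ℤ),
            (B : Matrix (Fin 2) (Fin 2) ℤ) = !![2^n, α'; β' * N, (α' * β' * N + 1) / 2^n] ∧
            A = (W N)^u * B * T^v := by
  have hpow : (2:ℤ)^n = 2 * 2^(n-1) := by rw [← pow_succ']; congr 1; omega
  have heven : Even ((2:ℤ)^(n-1)) := Int.even_pow.mpr ⟨even_two, by omega⟩
  obtain ⟨α₁, v, hα₁, hα₁le, hαα₁, hv, hα'⟩ :=
    exists_odd_rep_of_abs_le heven hα (by linarith)
  obtain ⟨β₁, u, hβ₁, hβ₁le, hββ₁, hu, hβ'⟩ :=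
    exists_odd_rep_of_abs_le heven hβ (by linarith)
  rw [← hpow] at hα' hβ'
  have hdvd' := dvd_sub_mul_mul_sub_mul_mul_add_one v u hdvd
  obtain ⟨B, hB⟩ := exists_SL2_of_dvd hdvd'
  refine ⟨α₁, β₁, hα₁, hβ₁, hα₁le, hβ₁le, hαα₁, hββ₁, u, v, hu, hv, _, _, hα', hβ', hdvd', B, hB,
    SL2_ext_of_apply_zero_zero_ne_zero ?_ ?_ ?_ (by simp [hA])⟩ <;>
  simp [W_pow_mul_mul_T_pow_apply, hA, hB] <;> ring

/-- Every matrix `A = [[2^n, α],[βN, (αβN+1)/2^n]]` of level `2^n` with small odd `α, β` arises,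
up to multiplication by `T` and `W_N`, from one of the four matrices produced by the process at
level `2^(n-1)`. -/
theorem level_reduction (N : ℕ) (hN : 0 < N) (hNodd : Odd N) (n : ℕ) (hn : 2 ≤ n)
    (α β : ℤ) (hα : Odd α) (hβ : Odd β)
    (hαle : 2 * |α| ≤ 2^n) (hβle : 2 * |β| ≤ 2^n) (hdvd : ((2:ℤ)^n) ∣ α * β * N + 1)
    (A : SL(2, ℤ))
    (hA : (A : Matrix (Fin 2) (Fin 2) ℤ) = !![2^n, α; β * N, (α * β * N + 1) / 2^n]) :
    ∃ α₁ β₁ : ℤ, Odd α₁ ∧ Odd β₁ ∧ 2 * |α₁| ≤ 2^(n-1) ∧ 2 * |β₁| ≤ 2^(n-1) ∧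
      α ≡ α₁ [ZMOD ((2:ℤ)^(n-1))] ∧ β ≡ β₁ [ZMOD ((2:ℤ)^(n-1))] ∧
      ∃ u v : ℕ, (u = 0 ∨ u = 1) ∧ (v = 0 ∨ v = 1) ∧
        ∃ α' β' : ℤ, (α' = α₁ ∨ α' = α₁ - 2^(n-1)) ∧ (β' = β₁ ∨ β' = β₁ - 2^(n-1)) ∧
          ((2:ℤ)^n) ∣ α' * β' * N + 1 ∧
          ∃ B : SL(2, ℤ),
            (B : Matrix (Fin 2) (Fin 2) ℤ) = !![2^n, α'; β' * N, (α' * β' * N + 1) / 2^n] ∧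
            A = (W N)^u * B * T^v :=
  level_reduction_general N n hn α β hα hβ hαle hβle hdvd A hA
end
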